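/- With D_+² = −Δ − 4|x|² + 4𝔼 + 2m acting on polynomials in m variables and H_k a harmonic homogeneous polynomial of degree k, the Clifford–Hermite polynomial CH_{2t}(H_k) := (D_+²)^t H_k satisfies the differential equation (Δ − 2𝔼) CH_{2t}(H_k) = −2(2t + k) CH_{2t}(H_k). -/

import Mathlib

open MvPolynomial

/-- The Laplacian `Δ = ∑ ∂_{x_i}²` on polynomials in `m` variables. -/
noncomputable def lap (m : ℕ) : Module.End ℝ (MvPolynomial (Fin m) ℝ) :=
  ∑ i : Fin m, ((pderiv i).toLinearMap * (pderiv i).toLinearMap)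

/-- The Euler operator `𝔼 = ∑ x_i ∂_{x_i}`. -/
noncomputable def euler (m : ℕ) : Module.End ℝ (MvPolynomial (Fin m) ℝ) :=
  ∑ i : Fin m, (LinearMap.mulLeft ℝ (X i) * (pderiv i).toLinearMap)

/-- Multiplication by `|x|² = ∑ x_i²`. -/
noncomputable def nsqOp (m : ℕ) : Module.End ℝ (MvPolynomial (Fin m) ℝ) :=
  LinearMap.mulLeft ℝ (∑ i : Fin m, X i ^ 2)


/-- The scalar operator `D_+² = −Δ − 4|x|² + 4𝔼 + 2m`. -/
noncomputable def Dplus2 (m : ℕ) : Module.End ℝ (MvPolynomial (Fin m) ℝ) :=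
  -lap m - (4 : ℝ) • nsqOp m + (4 : ℝ) • euler m + ((2 * m : ℕ) : ℝ) • 1

/-! The operators `Δ`, `|x|²` and `𝔼` satisfy the `sl₂` relations `[Δ, |x|²] = 4𝔼 + 2m`,
`[𝔼, |x|²] = 2|x|²` and `[Δ, 𝔼] = 2Δ`, which combine to `[Δ - 2𝔼, D_+²] = -4 D_+²`.
So `D_+²` lowers eigenvalues of `Δ - 2𝔼` by `4`, and `H_k` is an eigenvector with eigenvalue
`-2k` because it is harmonic and, by Euler's identity, `𝔼 H_k = k H_k`. -/

namespace MvPolynomial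

variable {σ R : Type*}

theorem pderiv_pderiv_comm [CommRing R] (i j : σ) (p : MvPolynomial σ R) :
    pderiv i (pderiv j p) = pderiv j (pderiv i p) := by
  have h : ⁅pderiv (R := R) i, pderiv (R := R) j⁆ = 0 := by
    refine derivation_ext fun k => ?_
    classical simp [Derivation.commutator_apply, pderiv_X, Pi.single_apply, apply_ite]
  rw [← sub_eq_zero, ← Derivation.commutator_apply, h, Derivation.zero_apply]

theorem pderiv_sum_X_sq [CommSemiring R] [Fintype σ] (i : σ) :
    pderiv i (∑ j, X j ^ 2 : MvPolynomial σ R) = 2 • X i := by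
  classical
  simp [pderiv_X, Pi.single_apply]

end MvPolynomial

theorem Module.End.apply_pow_apply_of_lie_eq_smul {R M : Type*} [CommRing R] [AddCommGroup M]
    [Module R M] {A B : Module.End R M} {c μ : R} (hAB : ⁅A, B⁆ = c • B) {v : M}
    (hv : A v = μ • v) (t : ℕ) : A ((B ^ t) v) = (μ + t * c) • (B ^ t) v := by
  induction t with
  | zero => simpa using hv
  | succ t ih =>
    have hcomm : A * B = B * A + c • B := by rw [← hAB, Ring.lie_def]; abel
    rw [pow_succ', Module.End.mul_apply, ← Module.End.mul_apply A, hcomm, LinearMap.add_apply,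
      Module.End.mul_apply, ih, LinearMap.smul_apply, map_smul, ← add_smul]
    congr 1
    push_cast
    ring

section

variable {m : ℕ}

lemma lap_apply (p : MvPolynomial (Fin m) ℝ) : lap m p = ∑ i, pderiv i (pderiv i p) := by
  simp [lap, Module.End.mul_apply, LinearMap.sum_apply]

lemma euler_apply (p : MvPolynomial (Fin m) ℝ) : euler m p = ∑ i, X i * pderiv i p := by
  simp [euler, Module.End.mul_apply, LinearMap.sum_apply]

lemma nsqOp_apply (p : MvPolynomial (Fin m) ℝ) : nsqOp m p = (∑ i, X i ^ 2) * p := rfl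

lemma Dplus2_apply (p : MvPolynomial (Fin m) ℝ) :
    Dplus2 m p = -lap m p - (4 : ℝ) • nsqOp m p + (4 : ℝ) • euler m p
      + ((2 * m : ℕ) : ℝ) • p := by
  simp [Dplus2]

lemma euler_eq_smul_of_isHomogeneous {k : ℕ} {p : MvPolynomial (Fin m) ℝ}
    (hp : p.IsHomogeneous k) : euler m p = (k : ℝ) • p := by
  rw [euler_apply, hp.sum_X_mul_pderiv, Nat.cast_smul_eq_nsmul]

lemma lap_nsqOp (p : MvPolynomial (Fin m) ℝ) :
    lap m (nsqOp m p) = nsqOp m (lap m p) + 4 • euler m p + (2 * m) • p := by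
  have h (i : Fin m) : pderiv i (pderiv i ((∑ j, X j ^ 2) * p)) =
      (∑ j, X j ^ 2) * pderiv i (pderiv i p) + 4 • (X i * pderiv i p) + 2 • p := by
    simp only [pderiv_mul, pderiv_sum_X_sq, map_add, map_nsmul, smul_mul_assoc, pderiv_X_self]
    ring
  simp only [lap_apply, euler_apply, nsqOp_apply, h, Finset.sum_add_distrib, Finset.mul_sum,
    Finset.smul_sum, Finset.sum_const, Finset.card_univ, Fintype.card_fin, mul_nsmul]

lemma euler_nsqOp (p : MvPolynomial (Fin m) ℝ) :
    euler m (nsqOp m p) = nsqOp m (euler m p) + 2 • nsqOp m p := by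
  have h (i : Fin m) : X i * pderiv i ((∑ j, X j ^ 2) * p) =
      (∑ j, X j ^ 2) * (X i * pderiv i p) + 2 • (X i ^ 2 * p) := by
    rw [pderiv_mul, pderiv_sum_X_sq]
    ring
  rw [euler_apply, euler_apply, nsqOp_apply, nsqOp_apply, Finset.sum_congr rfl fun i _ => h i,
    Finset.sum_add_distrib, ← Finset.mul_sum, ← Finset.smul_sum, ← Finset.sum_mul]

lemma lap_euler (p : MvPolynomial (Fin m) ℝ) :
    lap m (euler m p) = euler m (lap m p) + 2 • lap m p := by
  have h (i j : Fin m) : pderiv i (pderiv i (X j * pderiv j p)) =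
      X j * pderiv j (pderiv i (pderiv i p)) + if j = i then 2 • pderiv i (pderiv i p) else 0 := by
    rcases eq_or_ne j i with rfl | hji
    · simp only [pderiv_mul, map_add, pderiv_X_self, pderiv_one, if_pos]
      ring
    · simp only [pderiv_mul, pderiv_X_of_ne hji, if_neg hji, zero_mul, zero_add, add_zero]
      rw [pderiv_pderiv_comm j i, pderiv_pderiv_comm j i]
  simp only [lap_apply, euler_apply, map_sum, h, Finset.sum_add_distrib, Finset.sum_ite_eq,
    Finset.mem_univ, if_true, Finset.smul_sum]
  rw [Finset.sum_comm]

lemma lie_lap_sub_euler_Dplus2 :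
    ⁅lap m - (2 : ℝ) • euler m, Dplus2 m⁆ = (-4 : ℝ) • Dplus2 m := by
  refine LinearMap.ext fun p => ?_
  simp only [Ring.lie_def, LinearMap.sub_apply, LinearMap.smul_apply, Module.End.mul_apply,
    Dplus2_apply, map_add, map_sub, map_neg, map_smul, lap_nsqOp, euler_nsqOp, lap_euler]
  module

end

theorem cliffordHermite_diff_eq (m k t : ℕ) (H : MvPolynomial (Fin m) ℝ)
    (hH : H.IsHomogeneous k) (hharm : lap m H = 0) :
    (lap m - (2 : ℝ) • euler m) ((Dplus2 m ^ t) H) =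
      (-(2 * (2 * t + k) : ℝ)) • (Dplus2 m ^ t) H := by
  have hH_eigen : (lap m - (2 : ℝ) • euler m) H = (-(2 * k) : ℝ) • H := by
    rw [LinearMap.sub_apply, LinearMap.smul_apply, hharm, euler_eq_smul_of_isHomogeneous hH,
      smul_smul, zero_sub, ← neg_smul]
  rw [Module.End.apply_pow_apply_of_lie_eq_smul lie_lap_sub_euler_Dplus2 hH_eigen t]
  congr 1
  ring
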